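/- arXiv:2409.10137 — 2 statements merged into one kernel-verified Lean document; each statement's English description precedes it below -/
import Mathlib

section
/- Let k be a field of characteristic p > 0, S = k[x_1,…,x_n,y_1,…,y_n], m = (x_1,…,x_n,y_1,…,y_n) the irrelevant maximal ideal, and f = y_1 · f_{1,2} · f_{2,3} ⋯ f_{n−1,n} · x_n, where f_{i,j} = x_i y_j − x_j y_i. Then f^{p−1} ∉ m^{[p]}. -/
open MvPolynomial

/-! ### Symbolic powers -/

/-- The component of the `m`-th symbolic power of `I` at a prime `p`:
the contraction to `R` of `I^m R_p`. -/
noncomputable def symbolicComponent {R : Type*} [CommRing R] (I : Ideal R) (m : ℕ)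
    (p : Ideal R) (hp : p.IsPrime) : Ideal R :=
  letI := hp
  (Ideal.map (algebraMap R (Localization.AtPrime p)) (I ^ m)).comap
    (algebraMap R (Localization.AtPrime p))

/-- The `m`-th symbolic power of an ideal `I`: the intersection of the contractions
`I^m R_p ∩ R` over all minimal primes `p` of `I`. -/
noncomputable def symbolicPower {R : Type*} [CommRing R] (I : Ideal R) (m : ℕ) : Ideal R :=
  sInf { J : Ideal R | ∃ p : Ideal R, ∃ hp : p ∈ I.minimalPrimes,
    J = symbolicComponent I m p hp.1.1 }

/-! ### Binomial edge ideals -/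

section BEI
variable (k : Type*) [Field k] {n : ℕ}

/-- The variable `x i` of `k[x_1,…,x_n,y_1,…,y_n]`. -/
noncomputable def xv (i : Fin n) : MvPolynomial (Fin n ⊕ Fin n) k := X (Sum.inl i)

/-- The variable `y i` of `k[x_1,…,x_n,y_1,…,y_n]`. -/
noncomputable def yv (i : Fin n) : MvPolynomial (Fin n ⊕ Fin n) k := X (Sum.inr i)

/-- The binomial `f_{i,j} = x_i y_j - x_j y_i`. -/
noncomputable def fb (i j : Fin n) : MvPolynomial (Fin n ⊕ Fin n) k :=
  xv k i * yv k j - xv k j * yv k i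

/-- The binomial edge ideal `J_G ⊆ k[x_1,…,x_n,y_1,…,y_n]` of a finite simple graph `G`
on the vertex set `{1,…,n}`. -/
noncomputable def binomialEdgeIdeal (G : SimpleGraph (Fin n)) :
    Ideal (MvPolynomial (Fin n ⊕ Fin n) k) :=
  Ideal.span { f | ∃ i j : Fin n, G.Adj i j ∧ f = fb k i j }

end BEI

/-! ### Frobenius powers, heights, components -/

/-- The `q`-th Frobenius power `I^{[q]}` of an ideal: the ideal generated by the `q`-th
powers of the elements of `I`. -/
def frobeniusPower {R : Type*} [CommRing R] (I : Ideal R) (q : ℕ) : Ideal R :=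
  Ideal.span ((fun f => f ^ q) '' (I : Set R))

/-- The height of an ideal `I`: the infimum of the heights (in the prime spectrum) of the
minimal primes of `I`.  For a prime ideal this is its usual height. -/
noncomputable def idealHeight {R : Type*} [CommRing R] (I : Ideal R) : ℕ∞ :=
  sInf { h : ℕ∞ | ∃ p : Ideal R, ∃ hp : p ∈ I.minimalPrimes,
    h = Order.height (⟨p, hp.1.1⟩ : PrimeSpectrum R) }

/-- The irrelevant maximal ideal of a polynomial ring, generated by the variables. -/
noncomputable def irrelevantIdeal (k : Type*) [CommSemiring k] (σ : Type*) :
    Ideal (MvPolynomial σ k) :=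
  Ideal.span (Set.range MvPolynomial.X)

/-- The number of connected components of a graph. -/
noncomputable def numComponents {V : Type*} (G : SimpleGraph V) : ℕ :=
  Nat.card G.ConnectedComponent

/-! ### Special elements and the primes p_U(G) -/

section Special
variable (k : Type*) [Field k]

/-- The product `f_{1,2} f_{2,3} ⋯ f_{n-1,n}`. -/
noncomputable def pathProd (n : ℕ) : MvPolynomial (Fin n ⊕ Fin n) k :=
  ∏ i : Fin n, if h : i.val + 1 < n then fb k i ⟨i.val + 1, h⟩ else 1

/-- The element `f = y_1 · f_{1,2} f_{2,3} ⋯ f_{n-1,n} · x_n`. -/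
noncomputable def fSpecial (n : ℕ) (hn : 0 < n) : MvPolynomial (Fin n ⊕ Fin n) k :=
  yv k ⟨0, hn⟩ * pathProd k n * xv k ⟨n - 1, by omega⟩

/-- The element `q = y_1 · f_{2,3} f_{3,4} ⋯ f_{n-1,n} · x_n`. -/
noncomputable def qSpecial (n : ℕ) (hn : 0 < n) : MvPolynomial (Fin n ⊕ Fin n) k :=
  yv k ⟨0, hn⟩ *
    (∏ i : Fin n, if h : 1 ≤ i.val ∧ i.val + 1 < n then fb k i ⟨i.val + 1, h.2⟩ else 1) *
    xv k ⟨n - 1, by omega⟩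

/-- The prime ideal `p_U(G) = ({x_i, y_i : i ∈ U}) + J_{K(V(G_1))} + ⋯ + J_{K(V(G_c))}`,
where `G_1,…,G_c` are the connected components of the induced subgraph of `G` on the
complement of `U` and `K(V(G_i))` is the complete graph on the vertices of `G_i`. -/
noncomputable def pUIdeal {n : ℕ} (G : SimpleGraph (Fin n)) (U : Set (Fin n)) :
    Ideal (MvPolynomial (Fin n ⊕ Fin n) k) :=
  Ideal.span
    ({ f | ∃ i ∈ U, f = xv k i ∨ f = yv k i } ∪
      { f | ∃ u v : Fin n, ∃ hu : u ∈ Uᶜ, ∃ hv : v ∈ Uᶜ, u ≠ v ∧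
          (G.induce Uᶜ).Reachable ⟨u, hu⟩ ⟨v, hv⟩ ∧ f = fb k u v })

end Special

/-!
In characteristic `p` the Frobenius map is a ring endomorphism, so `m^[p]` is the monomial ideal
`(X_s ^ p)`: a polynomial lies in it iff each of its monomials has some exponent `≥ p`.
In the lexicographic order with `x_1 > ⋯ > x_n > y_1, …, y_n`, the leading monomial of
`f_{i,i+1}` is `x_i y_{i+1}`, so the leading monomial of `f` is the product of all `2n`
variables, and that of `f^{p-1}` has every exponent equal to `p - 1`.
-/

open MonomialOrder Finsupp Sum

section FrobeniusPower

variable {R : Type*} [CommRing R] (p : ℕ) [ExpChar R p]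

theorem frobeniusPower_eq_map (I : Ideal R) : frobeniusPower I p = I.map (frobenius R p) :=
  rfl

theorem frobeniusPower_span (S : Set R) :
    frobeniusPower (Ideal.span S) p = Ideal.span ((· ^ p) '' S) := by
  rw [frobeniusPower_eq_map, Ideal.map_span]
  rfl

theorem mem_frobeniusPower_irrelevantIdeal_iff {σ : Type*} {g : MvPolynomial σ R} :
    g ∈ frobeniusPower (irrelevantIdeal R σ) p ↔ ∀ d ∈ g.support, ∃ s, p ≤ d s := by
  have hpow : ((· ^ p) ∘ X : σ → MvPolynomial σ R) =
      (fun d => monomial d 1) ∘ fun s => single s p := by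
    ext1 s
    simp [X_pow_eq_monomial]
  rw [irrelevantIdeal, frobeniusPower_span, ← Set.range_comp, hpow, Set.range_comp,
    mem_ideal_span_monomial_image]
  simp [single_le_iff]

theorem pow_sub_one_notMem_frobeniusPower_of_degree_le_one [NoZeroDivisors R] {σ : Type*}
    (o : MonomialOrder σ) {g : MvPolynomial σ R} (hg : g ≠ 0) (hdeg : ∀ s, o.degree g s ≤ 1) :
    g ^ (p - 1) ∉ frobeniusPower (irrelevantIdeal R σ) p := by
  rw [mem_frobeniusPower_irrelevantIdeal_iff]
  push Not
  refine ⟨(p - 1) • o.degree g, ?_, fun s => ?_⟩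
  · rw [MvPolynomial.mem_support_iff, coeff_pow_nsmul_degree]
    exact pow_ne_zero _ (o.leadingCoeff_ne_zero_iff.mpr hg)
  · rw [Finsupp.smul_apply, smul_eq_mul]
    calc (p - 1) * o.degree g s ≤ p - 1 := mul_le_of_le_one_right (Nat.zero_le _) (hdeg s)
      _ < p := Nat.sub_lt (expChar_pos R p) one_pos

end FrobeniusPower

section LeadingMonomial

variable {k : Type*} [Field k]

theorem fb_eq_monomial_sub_monomial {n : ℕ} (i j : Fin n) :
    fb k i j = monomial (single (inl i) 1 + single (inr j) 1) 1
      - monomial (single (inl j) 1 + single (inr i) 1) 1 := by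
  simp only [fb, xv, yv, X, monomial_mul, one_mul]

theorem degree_fb {n : ℕ} (o : MonomialOrder (Fin n ⊕ Fin n)) {i j : Fin n}
    (h : single (inl j) 1 + single (inr i) 1 ≺[o] single (inl i) 1 + single (inr j) 1) :
    o.degree (fb k i j) = single (inl i) 1 + single (inr j) 1 := by
  classical
  rw [fb_eq_monomial_sub_monomial, o.degree_sub_of_lt] <;>
    simp only [o.degree_monomial, one_ne_zero, if_false, h]

theorem fSpecial_succ {m : ℕ} (hn : 0 < m + 1) :
    fSpecial k (m + 1) hn =
      yv k 0 * (∏ i : Fin m, fb k i.castSucc i.succ) * xv k (Fin.last m) := by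
  simp only [fSpecial, pathProd, Fin.prod_univ_castSucc, Fin.val_castSucc, Fin.val_last,
    add_lt_add_iff_right, Fin.is_lt, dif_pos, lt_irrefl, dif_neg, not_false_eq_true, mul_one]
  rfl

theorem degree_fSpecial_succ {m : ℕ} (hn : 0 < m + 1)
    (o : MonomialOrder (Fin (m + 1) ⊕ Fin (m + 1)))
    (ho : ∀ i : Fin m, single (inl i.succ) 1 + single (inr i.castSucc) 1
      ≺[o] single (inl i.castSucc) 1 + single (inr i.succ) 1) :
    o.degree (fSpecial k (m + 1) hn) = ∑ s, single s 1 := by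
  have hfb : ∀ i : Fin m, fb k i.castSucc i.succ ≠ 0 := fun i =>
    o.ne_zero_of_degree_ne_zero (by simp [degree_fb o (ho i)])
  rw [fSpecial_succ, xv, yv, o.degree_mul, o.degree_mul, o.degree_prod fun i _ => hfb i,
    o.degree_X, o.degree_X]
  · simp only [degree_fb o (ho _), Finset.sum_add_distrib, Fintype.sum_sum_type,
      Fin.sum_univ_castSucc (fun i => single (inl i) 1),
      Fin.sum_univ_succ (fun i => single (inr i) 1)]
    abel
  all_goals simp [Finset.prod_ne_zero_iff, hfb, X_ne_zero]

end LeadingMonomial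

theorem lex_single_inl_add_single_inr_lt {n : ℕ} {i j : Fin n} (hij : i < j) :
    single (toLex (inl j)) 1 + single (toLex (inr i)) 1
      ≺[(lex : MonomialOrder (Fin n ⊕ₗ Fin n))]
        single (toLex (inl i)) 1 + single (toLex (inr j)) 1 := by
  rw [lex_lt_iff, Finsupp.Lex.lt_iff]
  refine ⟨toLex (inl i), fun l hl => ?_, by simp [hij.ne']⟩
  obtain ⟨l | l, rfl⟩ := toLex.surjective l
  · have hli : l < i := Sum.Lex.inl_lt_inl_iff.mp hl
    simp [hli.ne, (hli.trans hij).ne]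
  · exact absurd hl Sum.Lex.not_inr_lt_inl

/-- In `S = k[x_1,…,x_n,y_1,…,y_n]` over a field of characteristic
`p > 0`, the element `f = y_1 · f_{1,2} f_{2,3} ⋯ f_{n-1,n} · x_n` satisfies
`f^{p-1} ∉ m^{[p]}`, where `m` is the irrelevant maximal ideal. -/
theorem fSpecial_pow_not_mem_frobeniusPower
    {k : Type*} [Field k] (p : ℕ) (hp : p.Prime) [CharP k p]
    {n : ℕ} (hn : 0 < n) :
    fSpecial k n hn ^ (p - 1) ∉
      frobeniusPower (irrelevantIdeal k (Fin n ⊕ Fin n)) p := by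
  have : Fact p.Prime := ⟨hp⟩
  obtain ⟨m, rfl⟩ : ∃ m, n = m + 1 := ⟨n - 1, by omega⟩
  let o : MonomialOrder (Fin (m + 1) ⊕ Fin (m + 1)) :=
    (lex : MonomialOrder (Fin (m + 1) ⊕ₗ Fin (m + 1)))
  have hdeg : ∀ s, o.degree (fSpecial k (m + 1) hn) s = 1 := fun s => by
    rw [degree_fSpecial_succ hn o fun i => lex_single_inl_add_single_inr_lt i.castSucc_lt_succ]
    simp only [finsetSum_apply, single_apply, Finset.sum_ite_eq', Finset.mem_univ, if_true]
  refine pow_sub_one_notMem_frobeniusPower_of_degree_le_one p o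
    (o.ne_zero_of_degree_ne_zero fun h => ?_) fun s => (hdeg s).le
  simpa [h] using hdeg (inl 0)
end

section
/- Let k be a field and G a finite simple graph on the vertex set {1,…,n}. Then the binomial edge ideal satisfies J_G = ⋂_{U ⊆ {1,…,n}} p_U(G). -/
open MvPolynomial

/-!
`J_G ⊆ p_U(G)` is immediate. For the converse induct on `G`, ordered lexicographically by the
number of non-isolated vertices and then by the number of non-adjacent pairs in a common
component. If every neighbourhood is a clique, every component of `G` is complete and
`p_∅(G) = J_G`. Otherwise pick `v` with two non-adjacent neighbours; let `G_v` be `G` with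
`N(v)` made a clique, `G ∖ v` be `G` without the edges at `v`, and `φ_v` the substitution
`x_v = y_v = 0`. Both graphs are smaller. For `g ∈ ⋂_U p_U(G)` we get
`g ∈ ⋂_U p_U(G_v) = J_{G_v}`, and, since `φ_v` maps `p_{U ∪ {v}}(G)` into `p_U(G ∖ v)`,
`φ_v g ∈ ⋂_U p_U(G ∖ v) = J_{G ∖ v} ⊆ J_G`. Ohtani's lemma `J_{G_v} ∩ φ_v⁻¹(J_G) ⊆ J_G`
concludes.
-/

namespace SimpleGraph

variable {V : Type*} (G : SimpleGraph V)

def completeOn (s : Set V) : SimpleGraph V where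
  Adj a b := a ≠ b ∧ a ∈ s ∧ b ∈ s
  symm := ⟨fun _ _ h => ⟨h.1.symm, h.2.2, h.2.1⟩⟩
  loopless := ⟨fun _ h => h.1 rfl⟩

def reachableNonadj : Set (V × V) :=
  {p | G.Reachable p.1 p.2 ∧ p.1 ≠ p.2 ∧ ¬G.Adj p.1 p.2}

variable {G}

lemma adj_of_reachable_of_forall_isClique_neighborSet
    (hG : ∀ v, G.IsClique (G.neighborSet v)) {a b : V} (hab : G.Reachable a b) (hne : a ≠ b) :
    G.Adj a b := by
  rw [reachable_iff_reflTransGen] at hab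
  induction hab using Relation.ReflTransGen.head_induction_on with
  | refl => exact absurd rfl hne
  | @head _ c hac _ ih =>
    by_cases hcb : c = b
    · exact hcb ▸ hac
    · exact hG c (G.adj_symm hac) (ih hcb) hne

lemma support_deleteIncidenceSet_ssubset {v : V} (hv : v ∈ G.support) :
    (G.deleteIncidenceSet v).support ⊂ G.support :=
  (G.support_deleteIncidenceSet_subset v).trans_ssubset (Set.sdiff_singleton_ssubset.mpr hv)

variable (v : V)

lemma reachable_sup_completeOn_neighborSet_iff {a b : V} :
    (G ⊔ completeOn (G.neighborSet v)).Reachable a b ↔ G.Reachable a b := by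
  refine ⟨fun h => ?_, fun h => h.mono le_sup_left⟩
  rw [reachable_iff_reflTransGen] at h
  induction h with
  | refl => rfl
  | tail _ hcd ih =>
    rcases hcd with hcd | ⟨-, hvc, hvd⟩
    · exact ih.trans hcd.reachable
    · exact ih.trans ((G.adj_symm hvc).reachable.trans (G.mem_neighborSet _ _ |>.mp hvd).reachable)

lemma support_sup_completeOn_neighborSet :
    (G ⊔ completeOn (G.neighborSet v)).support = G.support := by
  refine (support_mono le_sup_left).antisymm' fun a ⟨b, hab⟩ => ?_
  rcases hab with hab | ⟨-, hva, -⟩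
  · exact ⟨b, hab⟩
  · exact ⟨v, G.adj_symm hva⟩

lemma reachableNonadj_sup_completeOn_neighborSet_ssubset (hv : ¬G.IsClique (G.neighborSet v)) :
    (G ⊔ completeOn (G.neighborSet v)).reachableNonadj ⊂ G.reachableNonadj := by
  obtain ⟨a, hva, b, hvb, hne, hab⟩ : ∃ a ∈ G.neighborSet v, ∃ b ∈ G.neighborSet v,
      a ≠ b ∧ ¬G.Adj a b := by
    simpa [IsClique, Set.Pairwise] using hv
  refine ⟨fun p ⟨hp, hne', hnadj⟩ => ⟨(reachable_sup_completeOn_neighborSet_iff v).mp hp, hne',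
    fun h => hnadj (Or.inl h)⟩, fun hsub => ?_⟩
  have hmem : (a, b) ∈ G.reachableNonadj :=
    ⟨(G.adj_symm hva).reachable.trans (G.mem_neighborSet _ _ |>.mp hvb).reachable, hne, hab⟩
  exact (hsub hmem).2.2 (Or.inr ⟨hne, hva, hvb⟩)

end SimpleGraph

lemma MvPolynomial.sub_aeval_indicator_compl_mem_span {σ R : Type*} [CommRing R] (T : Set σ)
    (f : MvPolynomial σ R) : f - aeval (Tᶜ.indicator X) f ∈ Ideal.span (X '' T) := by
  set I := Ideal.span (X '' T : Set (MvPolynomial σ R))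
  suffices h : (Ideal.Quotient.mkₐ R I).comp (aeval (Tᶜ.indicator X)) = Ideal.Quotient.mkₐ R I by
    rw [← Ideal.Quotient.eq, ← Ideal.Quotient.mkₐ_eq_mk R, ← AlgHom.comp_apply, h]
  refine algHom_ext fun s => ?_
  by_cases hs : s ∈ T
  · simpa [Set.indicator_of_notMem (Set.notMem_compl_iff.mpr hs)] using
      (Ideal.Quotient.eq_zero_iff_mem.mpr (Ideal.subset_span (Set.mem_image_of_mem X hs))).symm
  · simp [Set.indicator_of_mem (Set.mem_compl hs)]

lemma Ideal.sub_mem_mul_span_of_map_eq {R F : Type*} [CommRing R] [FunLike F R R]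
    [RingHomClass F R R] (φ : F) {S : Set R} (hS : ∀ s ∈ S, φ s = s) {K : Ideal R}
    (hK : ∀ r, r - φ r ∈ K) {q : R} (hq : q ∈ Ideal.span S) : q - φ q ∈ K * Ideal.span S := by
  induction hq using Submodule.span_induction with
  | mem s hs => simp [hS s hs]
  | zero => simp
  | add x y _ _ hx hy => simpa [add_sub_add_comm] using add_mem hx hy
  | smul r x hx ih =>
    have key : r * x - φ (r * x) = (r - φ r) * x + φ r * (x - φ x) := by rw [map_mul]; ring
    rw [smul_eq_mul, key]
    exact add_mem (Ideal.mul_mem_mul (hK r) hx) (Ideal.mul_mem_left _ _ ih)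

section BinomialEdgeIdeal

open SimpleGraph

variable {k : Type*} [Field k] {n : ℕ}

variable (k) in
/-- The substitution `φ_v : x_v, y_v ↦ 0`. -/
noncomputable def killVertex (v : Fin n) :
    MvPolynomial (Fin n ⊕ Fin n) k →ₐ[k] MvPolynomial (Fin n ⊕ Fin n) k :=
  aeval (({Sum.inl v, Sum.inr v} : Set (Fin n ⊕ Fin n))ᶜ.indicator X)

lemma killVertex_xv (v i : Fin n) : killVertex k v (xv k i) = if i = v then 0 else xv k i := by
  split_ifs with h <;> simp [killVertex, xv, h]

lemma killVertex_yv (v i : Fin n) : killVertex k v (yv k i) = if i = v then 0 else yv k i := by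
  split_ifs with h <;> simp [killVertex, yv, h]

lemma killVertex_fb_of_ne {v a b : Fin n} (ha : a ≠ v) (hb : b ≠ v) :
    killVertex k v (fb k a b) = fb k a b := by
  simp [fb, killVertex_xv, killVertex_yv, ha, hb]

lemma killVertex_fb_of_eq {v a b : Fin n} (h : a = v ∨ b = v) : killVertex k v (fb k a b) = 0 := by
  rcases h with rfl | rfl <;> simp [fb, killVertex_xv, killVertex_yv]

lemma sub_killVertex_mem_span (v : Fin n) (f : MvPolynomial (Fin n ⊕ Fin n) k) :
    f - killVertex k v f ∈ Ideal.span {xv k v, yv k v} := by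
  have h := sub_aeval_indicator_compl_mem_span (R := k) {Sum.inl v, Sum.inr v} f
  rwa [Set.image_pair] at h

lemma binomialEdgeIdeal_mono {G H : SimpleGraph (Fin n)} (h : G ≤ H) :
    binomialEdgeIdeal k G ≤ binomialEdgeIdeal k H :=
  Ideal.span_mono fun _ ⟨i, j, hij, hf⟩ => ⟨i, j, h hij, hf⟩

lemma binomialEdgeIdeal_sup (G H : SimpleGraph (Fin n)) :
    binomialEdgeIdeal k (G ⊔ H) = binomialEdgeIdeal k G ⊔ binomialEdgeIdeal k H := by
  simp only [binomialEdgeIdeal, ← Ideal.span_union, sup_adj, or_and_right, exists_or,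
    Set.ofPred_or]

lemma binomialEdgeIdeal_le_comap_killVertex (G : SimpleGraph (Fin n)) (v : Fin n) :
    binomialEdgeIdeal k G ≤ (binomialEdgeIdeal k G).comap (killVertex k v) := by
  rw [binomialEdgeIdeal, Ideal.span_le]
  rintro _ ⟨a, b, hab, rfl⟩
  by_cases h : a = v ∨ b = v
  · simp [killVertex_fb_of_eq h]
  · obtain ⟨ha, hb⟩ := not_or.mp h
    rw [SetLike.mem_coe, Ideal.mem_comap, killVertex_fb_of_ne ha hb]
    exact Ideal.subset_span ⟨a, b, hab, rfl⟩

lemma span_mul_binomialEdgeIdeal_completeOn_neighborSet_le (G : SimpleGraph (Fin n)) (v : Fin n) :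
    Ideal.span {xv k v, yv k v} * binomialEdgeIdeal k (completeOn (G.neighborSet v)) ≤
      binomialEdgeIdeal k G := by
  have hf {a b : Fin n} (hab : G.Adj a b) : fb k a b ∈ binomialEdgeIdeal k G :=
    Ideal.subset_span ⟨a, b, hab, rfl⟩
  rw [binomialEdgeIdeal, Ideal.span_mul_span', Ideal.span_le]
  rintro _ ⟨s, hs, _, ⟨a, b, ⟨-, hva, hvb⟩, rfl⟩, rfl⟩
  rw [G.mem_neighborSet] at hva hvb
  rcases hs with rfl | rfl
  · change xv k v * fb k a b ∈ binomialEdgeIdeal k G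
    rw [show xv k v * fb k a b = xv k b * fb k a v + xv k a * fb k v b by simp only [fb]; ring]
    exact add_mem (Ideal.mul_mem_left _ _ (hf hva.symm)) (Ideal.mul_mem_left _ _ (hf hvb))
  · change yv k v * fb k a b ∈ binomialEdgeIdeal k G
    rw [show yv k v * fb k a b = yv k a * fb k v b + yv k b * fb k a v by simp only [fb]; ring]
    exact add_mem (Ideal.mul_mem_left _ _ (hf hvb)) (Ideal.mul_mem_left _ _ (hf hva.symm))

/-- Ohtani's lemma `J_{G_v} ∩ φ_v⁻¹(J_G) ⊆ J_G`. Write `g = a + q` with `a ∈ J_G` and `q` in the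
ideal of the clique on `N(v)`; the generators of the latter are fixed by `φ_v`, so
`q - φ_v q ∈ (x_v, y_v) · J_{K(N(v))} ⊆ J_G`. -/
lemma mem_binomialEdgeIdeal_of_killVertex_mem {G : SimpleGraph (Fin n)} {v : Fin n}
    {g : MvPolynomial (Fin n ⊕ Fin n) k}
    (hg : g ∈ binomialEdgeIdeal k (G ⊔ completeOn (G.neighborSet v)))
    (hkg : killVertex k v g ∈ binomialEdgeIdeal k G) : g ∈ binomialEdgeIdeal k G := by
  rw [binomialEdgeIdeal_sup] at hg
  obtain ⟨a, ha, q, hq, rfl⟩ := Submodule.mem_sup.mp hg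
  have hq' : q - killVertex k v q ∈ binomialEdgeIdeal k G := by
    refine span_mul_binomialEdgeIdeal_completeOn_neighborSet_le G v
      (Ideal.sub_mem_mul_span_of_map_eq (killVertex k v) ?_ (sub_killVertex_mem_span v) hq)
    rintro _ ⟨a, b, ⟨-, hva, hvb⟩, rfl⟩
    exact killVertex_fb_of_ne (G.ne_of_adj hva).symm (G.ne_of_adj hvb).symm
  have ha' : a - killVertex k v a ∈ binomialEdgeIdeal k G :=
    sub_mem ha (binomialEdgeIdeal_le_comap_killVertex G v ha)
  have : a + q = (a - killVertex k v a) + (q - killVertex k v q) + killVertex k v (a + q) := by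
    rw [map_add]; ring
  rw [this]
  exact add_mem (add_mem ha' hq') hkg

end BinomialEdgeIdeal

section PUIdeal

open SimpleGraph

variable {k : Type*} [Field k] {n : ℕ}

lemma binomialEdgeIdeal_le_pUIdeal (G : SimpleGraph (Fin n)) (U : Set (Fin n)) :
    binomialEdgeIdeal k G ≤ pUIdeal k G U := by
  have hx {i : Fin n} (hi : i ∈ U) : xv k i ∈ pUIdeal k G U :=
    Ideal.subset_span (Or.inl ⟨i, hi, Or.inl rfl⟩)
  have hy {i : Fin n} (hi : i ∈ U) : yv k i ∈ pUIdeal k G U :=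
    Ideal.subset_span (Or.inl ⟨i, hi, Or.inr rfl⟩)
  rw [binomialEdgeIdeal, Ideal.span_le]
  rintro _ ⟨i, j, hij, rfl⟩
  by_cases hi : i ∈ U
  · exact sub_mem (Ideal.mul_mem_right _ _ (hx hi)) (Ideal.mul_mem_left _ _ (hy hi))
  by_cases hj : j ∈ U
  · exact sub_mem (Ideal.mul_mem_left _ _ (hy hj)) (Ideal.mul_mem_right _ _ (hx hj))
  have hij' : (G.induce Uᶜ).Adj ⟨i, hi⟩ ⟨j, hj⟩ := hij
  exact Ideal.subset_span (Or.inr ⟨i, j, hi, hj, hij.ne, hij'.reachable, rfl⟩)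

lemma pUIdeal_mono {G H : SimpleGraph (Fin n)} (h : G ≤ H) (U : Set (Fin n)) :
    pUIdeal k G U ≤ pUIdeal k H U := by
  refine Ideal.span_mono (Set.union_subset_union_right _ ?_)
  rintro _ ⟨a, b, ha, hb, hne, hab, rfl⟩
  exact ⟨a, b, ha, hb, hne, hab.map (induceHom (.ofLE h) fun _ hx => hx), rfl⟩

lemma pUIdeal_insert_le_comap_killVertex (G : SimpleGraph (Fin n)) (v : Fin n)
    (U : Set (Fin n)) :
    pUIdeal k G (insert v U) ≤
      (pUIdeal k (G.deleteIncidenceSet v) U).comap (killVertex k v) := by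
  rw [pUIdeal, Ideal.span_le]
  rintro _ (⟨i, hi, rfl | rfl⟩ | ⟨a, b, ha, hb, hne, hab, rfl⟩)
  all_goals rw [SetLike.mem_coe, Ideal.mem_comap]
  · rcases eq_or_ne i v with rfl | hiv
    · simp [killVertex_xv]
    · rw [killVertex_xv, if_neg hiv]
      exact Ideal.subset_span (Or.inl ⟨i, hi.resolve_left hiv, Or.inl rfl⟩)
  · rcases eq_or_ne i v with rfl | hiv
    · simp [killVertex_yv]
    · rw [killVertex_yv, if_neg hiv]
      exact Ideal.subset_span (Or.inl ⟨i, hi.resolve_left hiv, Or.inr rfl⟩)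
  · have hvU : v ∉ (insert v U)ᶜ := fun h => h (Set.mem_insert v U)
    have hsub : (insert v U)ᶜ ⊆ Uᶜ := Set.compl_subset_compl.mpr (Set.subset_insert v U)
    rw [← G.induce_deleteIncidenceSet_of_notMem hvU] at hab
    rw [killVertex_fb_of_ne (ne_of_mem_of_not_mem ha hvU) (ne_of_mem_of_not_mem hb hvU)]
    exact Ideal.subset_span
      (Or.inr ⟨a, b, hsub ha, hsub hb, hne, hab.map (induceHomOfLE _ hsub).toHom, rfl⟩)

lemma pUIdeal_empty_le_binomialEdgeIdeal {G : SimpleGraph (Fin n)}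
    (hG : ∀ v, G.IsClique (G.neighborSet v)) : pUIdeal k G ∅ ≤ binomialEdgeIdeal k G := by
  rw [pUIdeal, Ideal.span_le]
  rintro _ (⟨i, hi, -⟩ | ⟨a, b, _, _, hne, hab, rfl⟩)
  · exact absurd hi (Set.notMem_empty i)
  · have hab' : G.Reachable a b := hab.map (Embedding.induce _).toHom
    exact Ideal.subset_span ⟨a, b, adj_of_reachable_of_forall_isClique_neighborSet hG hab' hne, rfl⟩

theorem iInf_pUIdeal_le_binomialEdgeIdeal (G : SimpleGraph (Fin n)) :
    ⨅ U, pUIdeal k G U ≤ binomialEdgeIdeal k G := by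
  by_cases hG : ∀ v, G.IsClique (G.neighborSet v)
  · exact (iInf_le _ ∅).trans (pUIdeal_empty_le_binomialEdgeIdeal hG)
  obtain ⟨v, hv⟩ := not_forall.mp hG
  have hvG : v ∈ G.support := by
    by_contra h
    exact hv fun a ha => absurd (G.mem_support.mpr ⟨a, ha⟩) h
  intro g hg
  rw [Ideal.mem_iInf] at hg
  have hfill : g ∈ binomialEdgeIdeal k (G ⊔ completeOn (G.neighborSet v)) :=
    iInf_pUIdeal_le_binomialEdgeIdeal _ <|
      Ideal.mem_iInf.mpr fun U => pUIdeal_mono le_sup_left U (hg U)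
  have hdel : killVertex k v g ∈ binomialEdgeIdeal k (G.deleteIncidenceSet v) :=
    iInf_pUIdeal_le_binomialEdgeIdeal _ <|
      Ideal.mem_iInf.mpr fun U => pUIdeal_insert_le_comap_killVertex G v U (hg (insert v U))
  exact mem_binomialEdgeIdeal_of_killVertex_mem hfill
    (binomialEdgeIdeal_mono (G.deleteIncidenceSet_le v) hdel)
termination_by (G.support.ncard, G.reachableNonadj.ncard)
decreasing_by
  · rw [support_sup_completeOn_neighborSet]
    exact Prod.Lex.right _ <| Set.ncard_lt_ncard
      (reachableNonadj_sup_completeOn_neighborSet_ssubset v hv) (Set.toFinite _)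
  · exact Prod.Lex.left _ _ <| Set.ncard_lt_ncard
      (support_deleteIncidenceSet_ssubset hvG) (Set.toFinite _)

end PUIdeal

/-- For any finite simple graph `G` on `{1,…,n}`, the binomial edge
ideal is the intersection of the prime ideals `p_U(G)` over all `U ⊆ {1,…,n}`. -/
theorem binomialEdgeIdeal_eq_iInf_pUIdeal
    {k : Type*} [Field k] {n : ℕ} (G : SimpleGraph (Fin n)) :
    binomialEdgeIdeal k G = ⨅ U : Set (Fin n), pUIdeal k G U :=
  le_antisymm (le_iInf (binomialEdgeIdeal_le_pUIdeal G)) (iInf_pUIdeal_le_binomialEdgeIdeal G)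
end
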